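/- The Hilbert extender graph of an interval order contains no induced cycle (hole) of length at least 5. More precisely, for any induced cycle C of length k ≥ 4 in the Hilbert extender graph, any gap coloring of C (coloring vertex v by an index i such that S_v = G_i ∪ Z is a gap decomposition) uses exactly two colors, and consequently k = 4. -/
import Mathlib


/-- The recession cone `Q*_P` of the length polyhedron: differences of length vectors of
real representations (with `r x + 1 ≤ l y` whenever `x < y`) from the canonical length
vector given by `lc, rc`. -/
def Qstar {α : Type*} [PartialOrder α] (lc rc : α → ℕ) : Set (α → ℝ) :=
  {ρ | ∃ l r : α → ℝ, (∀ x, l x ≤ r x) ∧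
    (∀ x y : α, x < y → r x + 1 ≤ l y) ∧
    (∀ x y : α, r x < l y → x < y) ∧
    ∀ x, ρ x = (r x - l x) - ((rc x : ℝ) - (lc x : ℝ))}

/-- `H` is an integral Hilbert basis for `C`: a finite set of integral vectors of `C`
such that every integral vector of `C` is a nonnegative integral combination of them. -/
def IsHilbertBasis {α : Type*} (C H : Set (α → ℝ)) : Prop :=
  H.Finite ∧ H ⊆ C ∧ (∀ h ∈ H, ∀ x, ∃ z : ℤ, h x = (z : ℝ)) ∧
  ∀ v ∈ C, (∀ x, ∃ z : ℤ, v x = (z : ℝ)) →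
    ∃ (T : Finset (α → ℝ)) (c : (α → ℝ) → ℕ), ↑T ⊆ H ∧ v = ∑ h ∈ T, (c h : ℝ) • h

/-- A minimal integral Hilbert basis: no proper subset is a Hilbert basis. -/
def IsMinimalHilbertBasis {α : Type*} (C H : Set (α → ℝ)) : Prop :=
  IsHilbertBasis C H ∧ ∀ H' ⊆ H, IsHilbertBasis C H' → H' = H

/-- Characteristic vector of a subset. -/
noncomputable def chiVec {α : Type*} (S : Set α) : α → ℝ := S.indicator 1

/-- The `i`th gap set: elements whose canonical interval contains `[i−1, i]`. -/
def gapSet {α : Type*} (lc rc : α → ℕ) (i : ℕ) : Set α :=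
  {x | lc x + 1 ≤ i ∧ i ≤ rc x}

/-- The `i`th left-borderline set: elements with canonical right endpoint `i − 1`. -/
def leftBorder {α : Type*} (rc : α → ℕ) (i : ℕ) : Set α := {x | rc x + 1 = i}

/-- The `i`th right-borderline set: elements with canonical left endpoint `i`. -/
def rightBorder {α : Type*} (lc : α → ℕ) (i : ℕ) : Set α := {x | lc x = i}

/-- A fundamental extender: a nonempty set of the form `G i ∪ Z` with `Z` contained in
the left or right borderline set of the `(i−1,i)`-gap. -/
def FundExt {α : Type*} (m : ℕ) (lc rc : α → ℕ) (S : Set α) : Prop :=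
  S.Nonempty ∧ ∃ i ≤ m, ∃ Z : Set α,
    (Z ⊆ leftBorder rc i ∨ Z ⊆ rightBorder lc i) ∧ S = gapSet lc rc i ∪ Z

/-- A Hilbert set: a fundamental extender whose characteristic vector belongs to the
unique minimal integral Hilbert basis of `Q*_P`. -/
def HilbertSet {α : Type*} [PartialOrder α] (m : ℕ) (lc rc : α → ℕ) (S : Set α) : Prop :=
  FundExt m lc rc S ∧
  ∃ H : Set (α → ℝ), IsMinimalHilbertBasis (Qstar lc rc) H ∧ chiVec S ∈ H

/-! ### Auxiliary lemmas -/

section Aux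

variable {α : Type*}

lemma mem_gapSet' {lc rc : α → ℕ} {i : ℕ} {x : α} :
    x ∈ gapSet lc rc i ↔ lc x + 1 ≤ i ∧ i ≤ rc x := Iff.rfl

lemma mem_leftBorder' {rc : α → ℕ} {i : ℕ} {x : α} :
    x ∈ leftBorder rc i ↔ rc x + 1 = i := Iff.rfl

lemma mem_rightBorder' {lc : α → ℕ} {i : ℕ} {x : α} :
    x ∈ rightBorder lc i ↔ lc x = i := Iff.rfl

/-- Every element of the recession cone is nonnegative (the canonical representation
has pointwise minimal lengths). -/
lemma qstar_nonneg [PartialOrder α] {m : ℕ} {lc rc : α → ℕ}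
    (hclr : ∀ x, lc x ≤ rc x) (hcrep : ∀ x y : α, x < y ↔ rc x + 1 ≤ lc y)
    (hcm : ∀ x, rc x < m) (hcan : ∀ i < m, (∃ x, lc x = i) ∧ (∃ x, rc x = i)) :
    ∀ ρ ∈ Qstar lc rc, ∀ x, (0 : ℝ) ≤ ρ x := by
  rintro ρ ⟨l, r, hlr, hord, hconv, hρ⟩ x
  have step : ∀ p p' : α, rc p = rc p' + 1 → r p' + 1 ≤ r p := by
    intro p p' hpp
    obtain ⟨q, hq⟩ := (hcan (rc p' + 1) (by have := hcm p; omega)).1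
    have h1 : p' < q := (hcrep p' q).mpr (by omega)
    have h2 : r p' + 1 ≤ l q := hord _ _ h1
    have h4 : l q ≤ r p := not_lt.mp fun hc => by
      have := (hcrep p q).mp (hconv _ _ hc); omega
    linarith
  have chain : ∀ n : ℕ, ∀ p p' : α, rc p = rc p' + (n + 1) →
      r p' + ((n : ℝ) + 1) ≤ r p := by
    intro n
    induction n with
    | zero =>
      intro p p' h
      have := step p p' (by omega)
      norm_num
      linarith
    | succ n ih =>
      intro p p' h
      obtain ⟨p'', hp''⟩ := (hcan (rc p' + (n + 1)) (by have := hcm p; omega)).2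
      have k1 := ih p'' p' (by omega)
      have k2 := step p p'' (by omega)
      push_cast
      push_cast at k1
      linarith
  rw [hρ x]
  rcases Nat.lt_or_ge (lc x) (rc x) with hlt | hge
  · obtain ⟨p', hp'⟩ := (hcan (lc x) (by have := hcm x; omega)).2
    have h4 : l x ≤ r p' := not_lt.mp fun hc => by
      have := (hcrep p' x).mp (hconv _ _ hc); omega
    set n := rc x - lc x - 1 with hn
    have h5 := chain n x p' (by omega)
    have h6 : ((n : ℝ) + 1) = (rc x : ℝ) - lc x := by
      have hh : n + 1 = rc x - lc x := by omega
      calc ((n : ℝ) + 1) = ((n + 1 : ℕ) : ℝ) := by push_cast; ring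
        _ = ((rc x - lc x : ℕ) : ℝ) := by rw [hh]
        _ = (rc x : ℝ) - lc x := by rw [Nat.cast_sub (by omega)]
    linarith
  · have hge' : lc x = rc x := le_antisymm (hclr x) hge
    have h0 : (rc x : ℝ) - lc x = 0 := by rw [hge']; ring
    rw [h0]
    linarith [hlr x]

/-- The characteristic vector of a fundamental extender with left-borderline `Z`
belongs to the cone. -/
lemma chi_mem_L [PartialOrder α] {lc rc : α → ℕ}
    (hclr : ∀ x, lc x ≤ rc x) (hcrep : ∀ x y : α, x < y ↔ rc x + 1 ≤ lc y)
    {i : ℕ} {Z : Set α} (hZ : Z ⊆ leftBorder rc i) :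
    chiVec (gapSet lc rc i ∪ Z) ∈ Qstar lc rc := by
  classical
  refine ⟨fun x => ((lc x + (if i ≤ lc x then 1 else 0) : ℕ) : ℝ),
    fun x => ((rc x + (if i ≤ rc x then 1 else 0) + (if x ∈ Z then 1 else 0) : ℕ) : ℝ),
    ?_, ?_, ?_, ?_⟩
  · intro x
    dsimp only
    have h : lc x + (if i ≤ lc x then 1 else 0) ≤
        rc x + (if i ≤ rc x then 1 else 0) + (if x ∈ Z then 1 else 0) := by
      have := hclr x; split_ifs <;> omega
    exact_mod_cast h
  · intro x y hxy
    dsimp only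
    have hN : rc x + 1 ≤ lc y := (hcrep x y).mp hxy
    have h : (rc x + (if i ≤ rc x then 1 else 0) + (if x ∈ Z then 1 else 0)) + 1 ≤
        lc y + (if i ≤ lc y then 1 else 0) := by
      by_cases hxz : x ∈ Z
      · have hzz : rc x + 1 = i := hZ hxz
        simp only [if_pos hxz]
        split_ifs <;> omega
      · simp only [if_neg hxz]
        split_ifs <;> omega
    exact_mod_cast h
  · intro x y hrl
    dsimp only at hrl
    rw [hcrep]
    by_contra hc
    have hc' : lc y ≤ rc x := by omega
    have h : lc y + (if i ≤ lc y then 1 else 0) ≤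
        rc x + (if i ≤ rc x then 1 else 0) + (if x ∈ Z then 1 else 0) := by
      split_ifs <;> omega
    have h' : ((lc y + (if i ≤ lc y then 1 else 0) : ℕ) : ℝ) ≤
        ((rc x + (if i ≤ rc x then 1 else 0) + (if x ∈ Z then 1 else 0) : ℕ) : ℝ) :=
      Nat.cast_le.mpr h
    linarith
  · intro x
    dsimp only
    by_cases hxz : x ∈ Z
    · have hzz : rc x + 1 = i := hZ hxz
      have h1 : chiVec (gapSet lc rc i ∪ Z) x = 1 := by
        rw [chiVec, Set.indicator_of_mem (Set.mem_union_right _ hxz)]; rfl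
      have e1 : rc x + (if i ≤ rc x then 1 else 0) + (if x ∈ Z then 1 else 0) = rc x + 1 := by
        simp only [if_pos hxz]; split_ifs <;> omega
      have e2 : lc x + (if i ≤ lc x then 1 else 0) = lc x := by
        have := hclr x; split_ifs <;> omega
      rw [h1, e1, e2]
      push_cast
      ring
    · by_cases hxg : x ∈ gapSet lc rc i
      · obtain ⟨hg1, hg2⟩ := mem_gapSet'.mp hxg
        have h1 : chiVec (gapSet lc rc i ∪ Z) x = 1 := by
          rw [chiVec, Set.indicator_of_mem (Set.mem_union_left _ hxg)]; rfl
        have e1 : rc x + (if i ≤ rc x then 1 else 0) + (if x ∈ Z then 1 else 0) = rc x + 1 := by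
          simp only [if_neg hxz]; split_ifs <;> omega
        have e2 : lc x + (if i ≤ lc x then 1 else 0) = lc x := by
          have := hclr x; split_ifs <;> omega
        rw [h1, e1, e2]
        push_cast
        ring
      · have h0 : chiVec (gapSet lc rc i ∪ Z) x = 0 := by
          rw [chiVec, Set.indicator_of_notMem (by
            rintro (h | h)
            · exact hxg h
            · exact hxz h)]
        have hgg : ¬ (lc x + 1 ≤ i ∧ i ≤ rc x) := fun h => hxg (mem_gapSet'.mpr h)
        by_cases hi : i ≤ lc x
        · have e1 : rc x + (if i ≤ rc x then 1 else 0) + (if x ∈ Z then 1 else 0)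
              = rc x + 1 := by
            rw [if_pos (by have := hclr x; omega), if_neg hxz]
          have e2 : lc x + (if i ≤ lc x then 1 else 0) = lc x + 1 := by rw [if_pos hi]
          rw [h0, e1, e2]
          push_cast
          ring
        · have hri : ¬ i ≤ rc x := fun h => hgg ⟨by omega, h⟩
          have e1 : rc x + (if i ≤ rc x then 1 else 0) + (if x ∈ Z then 1 else 0) = rc x := by
            simp only [if_neg hxz]; split_ifs <;> omega
          have e2 : lc x + (if i ≤ lc x then 1 else 0) = lc x := by split_ifs <;> omega
          rw [h0, e1, e2]
          push_cast
          ring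

/-- The characteristic vector of a fundamental extender with right-borderline `Z`
belongs to the cone. -/
lemma chi_mem_R [PartialOrder α] {lc rc : α → ℕ}
    (hclr : ∀ x, lc x ≤ rc x) (hcrep : ∀ x y : α, x < y ↔ rc x + 1 ≤ lc y)
    {i : ℕ} {Z : Set α} (hZ : Z ⊆ rightBorder lc i) :
    chiVec (gapSet lc rc i ∪ Z) ∈ Qstar lc rc := by
  classical
  refine ⟨fun x => ((lc x + (if i ≤ lc x then 1 else 0) - (if x ∈ Z then 1 else 0) : ℕ) : ℝ),
    fun x => ((rc x + (if i ≤ rc x then 1 else 0) : ℕ) : ℝ),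
    ?_, ?_, ?_, ?_⟩
  · intro x
    dsimp only
    have h : lc x + (if i ≤ lc x then 1 else 0) - (if x ∈ Z then 1 else 0) ≤
        rc x + (if i ≤ rc x then 1 else 0) := by
      have := hclr x
      by_cases hxz : x ∈ Z
      · have hzz : lc x = i := hZ hxz
        simp only [if_pos hxz]
        split_ifs <;> omega
      · simp only [if_neg hxz]
        split_ifs <;> omega
    exact_mod_cast h
  · intro x y hxy
    dsimp only
    have hN : rc x + 1 ≤ lc y := (hcrep x y).mp hxy
    have h : (rc x + (if i ≤ rc x then 1 else 0)) + 1 ≤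
        lc y + (if i ≤ lc y then 1 else 0) - (if y ∈ Z then 1 else 0) := by
      by_cases hyz : y ∈ Z
      · have hzz : lc y = i := hZ hyz
        simp only [if_pos hyz]
        split_ifs <;> omega
      · simp only [if_neg hyz]
        split_ifs <;> omega
    exact_mod_cast h
  · intro x y hrl
    dsimp only at hrl
    rw [hcrep]
    by_contra hc
    have hc' : lc y ≤ rc x := by omega
    have h : lc y + (if i ≤ lc y then 1 else 0) - (if y ∈ Z then 1 else 0) ≤
        rc x + (if i ≤ rc x then 1 else 0) := by
      by_cases hyz : y ∈ Z
      · have hzz : lc y = i := hZ hyz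
        simp only [if_pos hyz]
        split_ifs <;> omega
      · simp only [if_neg hyz]
        split_ifs <;> omega
    have h' : ((lc y + (if i ≤ lc y then 1 else 0) - (if y ∈ Z then 1 else 0) : ℕ) : ℝ) ≤
        ((rc x + (if i ≤ rc x then 1 else 0) : ℕ) : ℝ) := Nat.cast_le.mpr h
    linarith
  · intro x
    dsimp only
    by_cases hxz : x ∈ Z
    · have hzz : lc x = i := hZ hxz
      have h1 : chiVec (gapSet lc rc i ∪ Z) x = 1 := by
        rw [chiVec, Set.indicator_of_mem (Set.mem_union_right _ hxz)]; rfl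
      have e1 : rc x + (if i ≤ rc x then 1 else 0) = rc x + 1 := by
        have := hclr x; split_ifs <;> omega
      have e2 : lc x + (if i ≤ lc x then 1 else 0) - (if x ∈ Z then 1 else 0) = lc x := by
        simp only [if_pos hxz]; split_ifs <;> omega
      rw [h1, e1, e2]
      push_cast
      ring
    · by_cases hxg : x ∈ gapSet lc rc i
      · obtain ⟨hg1, hg2⟩ := mem_gapSet'.mp hxg
        have h1 : chiVec (gapSet lc rc i ∪ Z) x = 1 := by
          rw [chiVec, Set.indicator_of_mem (Set.mem_union_left _ hxg)]; rfl
        have e1 : rc x + (if i ≤ rc x then 1 else 0) = rc x + 1 := by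
          split_ifs <;> omega
        have e2 : lc x + (if i ≤ lc x then 1 else 0) - (if x ∈ Z then 1 else 0) = lc x := by
          simp only [if_neg hxz]; split_ifs <;> omega
        rw [h1, e1, e2]
        push_cast
        ring
      · have h0 : chiVec (gapSet lc rc i ∪ Z) x = 0 := by
          rw [chiVec, Set.indicator_of_notMem (by
            rintro (h | h)
            · exact hxg h
            · exact hxz h)]
        have hgg : ¬ (lc x + 1 ≤ i ∧ i ≤ rc x) := fun h => hxg (mem_gapSet'.mpr h)
        by_cases hi : i ≤ lc x
        · have e1 : rc x + (if i ≤ rc x then 1 else 0) = rc x + 1 := by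
            have := hclr x; split_ifs <;> omega
          have e2 : lc x + (if i ≤ lc x then 1 else 0) - (if x ∈ Z then 1 else 0)
              = lc x + 1 := by
            simp only [if_neg hxz]; split_ifs <;> omega
          rw [h0, e1, e2]
          push_cast
          ring
        · have hri : ¬ i ≤ rc x := fun h => hgg ⟨by omega, h⟩
          have e1 : rc x + (if i ≤ rc x then 1 else 0) = rc x := by split_ifs <;> omega
          have e2 : lc x + (if i ≤ lc x then 1 else 0) - (if x ∈ Z then 1 else 0) = lc x := by
            simp only [if_neg hxz]; split_ifs <;> omega
          rw [h0, e1, e2]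
          push_cast
          ring

/-- If the characteristic vector of `S` splits as a sum of characteristic vectors of two
nonempty cone members, then `S` is not a Hilbert set: its characteristic vector is
reducible, so it cannot belong to a minimal Hilbert basis. -/
lemma not_hilbertSet_of_decomp [Fintype α] [PartialOrder α] {m : ℕ} {lc rc : α → ℕ}
    (hclr : ∀ x, lc x ≤ rc x) (hcrep : ∀ x y : α, x < y ↔ rc x + 1 ≤ lc y)
    (hcm : ∀ x, rc x < m) (hcan : ∀ i < m, (∃ x, lc x = i) ∧ (∃ x, rc x = i))
    {S A B : Set α} (hU : S = A ∪ B) (hd : Disjoint A B)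
    (hA : A.Nonempty) (hB : B.Nonempty)
    (hAQ : chiVec A ∈ Qstar lc rc) (hBQ : chiVec B ∈ Qstar lc rc) :
    ¬ HilbertSet m lc rc S := by
  classical
  rintro ⟨-, H, ⟨⟨hfin, hsub, hint, hgen⟩, hmin⟩, hχH⟩
  have hnn : ∀ ρ ∈ Qstar lc rc, ∀ x, (0 : ℝ) ≤ ρ x := qstar_nonneg hclr hcrep hcm hcan
  set u : α → ℝ := chiVec A with hu_def
  set w : α → ℝ := chiVec B with hw_def
  set χ : α → ℝ := chiVec S with hχ_def
  have hchi : χ = u + w := by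
    rw [hχ_def, hu_def, hw_def]
    simp only [chiVec, hU]
    exact Set.indicator_union_of_disjoint hd 1
  set N : (α → ℝ) → ℝ := fun v => ∑ x, v x with hN_def
  have hNadd : N χ = N u + N w := by
    simp only [hN_def, hchi, Pi.add_apply]
    rw [Finset.sum_add_distrib]
  have hind1 : (1 : α → ℝ) = fun _ => (1 : ℝ) := rfl
  have hNu : (1 : ℝ) ≤ N u := by
    obtain ⟨a, ha⟩ := hA
    have h1 : u a = 1 := by rw [hu_def, chiVec, Set.indicator_of_mem ha]; rfl
    have h2 : u a ≤ N u :=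
      Finset.single_le_sum (f := fun x => u x) (fun x _ => hnn u hAQ x) (Finset.mem_univ a)
    linarith
  have hNw : (1 : ℝ) ≤ N w := by
    obtain ⟨b, hb⟩ := hB
    have h1 : w b = 1 := by rw [hw_def, chiVec, Set.indicator_of_mem hb]; rfl
    have h2 : w b ≤ N w :=
      Finset.single_le_sum (f := fun x => w x) (fun x _ => hnn w hBQ x) (Finset.mem_univ b)
    linarith
  have hint' : ∀ (SS : Set α) x, ∃ z : ℤ, chiVec SS x = (z : ℝ) := by
    intro SS x
    by_cases h : x ∈ SS
    · exact ⟨1, by rw [chiVec, Set.indicator_of_mem h]; norm_num⟩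
    · exact ⟨0, by rw [chiVec, Set.indicator_of_notMem h]; norm_num⟩
  obtain ⟨Tu, du, hTuH, hu⟩ := hgen u hAQ (hint' A)
  obtain ⟨Tw, dw, hTwH, hw⟩ := hgen w hBQ (hint' B)
  have hNform : ∀ (T : Finset (α → ℝ)) (d : (α → ℝ) → ℕ) (v : α → ℝ),
      v = ∑ h ∈ T, (d h : ℝ) • h → N v = ∑ h ∈ T, (d h : ℝ) * N h := by
    intro T d v hv
    simp only [hN_def, hv, Finset.sum_apply, Pi.smul_apply, smul_eq_mul]
    rw [Finset.sum_comm]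
    exact Finset.sum_congr rfl fun h _ => by rw [Finset.mul_sum]
  have hNχpos : (0 : ℝ) ≤ N χ := Finset.sum_nonneg fun x _ => hnn χ (hsub hχH) x
  have hdrop : ∀ (T : Finset (α → ℝ)) (d : (α → ℝ) → ℕ) (v : α → ℝ),
      ↑T ⊆ H → v = ∑ h ∈ T, (d h : ℝ) • h → N v < N χ →
      v = ∑ h ∈ T.erase χ, (d h : ℝ) • h := by
    intro T d v hTH hv hlt
    by_cases hχT : χ ∈ T
    · have hd0 : d χ = 0 := by
        by_contra hdne
        have h1 : (1 : ℝ) ≤ (d χ : ℝ) := by exact_mod_cast Nat.one_le_iff_ne_zero.mpr hdne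
        have hterms : ∀ h ∈ T, (0 : ℝ) ≤ (d h : ℝ) * N h := fun h hh =>
          mul_nonneg (by positivity)
            (Finset.sum_nonneg fun x _ => hnn h (hsub (hTH hh)) x)
        have hge : (d χ : ℝ) * N χ ≤ N v := by
          rw [hNform T d v hv]
          exact Finset.single_le_sum hterms hχT
        nlinarith
      rw [hv]
      exact (Finset.sum_erase T (by rw [hd0]; simp)).symm
    · rw [Finset.erase_eq_of_notMem hχT]
      exact hv
  have hNuχ : N u < N χ := by rw [hNadd]; linarith
  have hNwχ : N w < N χ := by rw [hNadd]; linarith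
  have hu' := hdrop Tu du u hTuH hu hNuχ
  have hw' := hdrop Tw dw w hTwH hw hNwχ
  have hTu'H : ↑(Tu.erase χ) ⊆ H \ {χ} := by
    intro h hh
    have hh' : h ∈ Tu.erase χ := hh
    exact ⟨hTuH (Finset.mem_coe.mpr (Finset.mem_of_mem_erase hh')),
      by simp [Finset.ne_of_mem_erase hh']⟩
  have hTw'H : ↑(Tw.erase χ) ⊆ H \ {χ} := by
    intro h hh
    have hh' : h ∈ Tw.erase χ := hh
    exact ⟨hTwH (Finset.mem_coe.mpr (Finset.mem_of_mem_erase hh')),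
      by simp [Finset.ne_of_mem_erase hh']⟩
  have hHB : IsHilbertBasis (Qstar lc rc) (H \ {χ}) := by
    refine ⟨hfin.subset Set.diff_subset, fun h hh => hsub hh.1, fun h hh => hint h hh.1, ?_⟩
    intro v hv hvint
    obtain ⟨T, cv, hTH, hvsum⟩ := hgen v hv hvint
    by_cases hχT : χ ∈ T
    · set T0 := T.erase χ with hT0
      set Tu' := Tu.erase χ with hTu'
      set Tw' := Tw.erase χ with hTw'
      set TT := (T0 ∪ Tu') ∪ Tw' with hTT
      have hT0TT : T0 ⊆ TT := Finset.subset_union_left.trans Finset.subset_union_left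
      have hTuTT : Tu' ⊆ TT := Finset.subset_union_right.trans Finset.subset_union_left
      have hTwTT : Tw' ⊆ TT := Finset.subset_union_right
      have hsplit : ∀ (S' : Finset (α → ℝ)) (g : (α → ℝ) → ℕ), S' ⊆ TT →
          ∑ h ∈ TT, ((if h ∈ S' then g h else 0 : ℕ) : ℝ) • h
            = ∑ h ∈ S', (g h : ℝ) • h := by
        intro S' g hS'
        rw [← Finset.sum_subset hS' (fun x _ hx => by rw [if_neg hx]; simp)]
        exact Finset.sum_congr rfl fun x hx => by rw [if_pos hx]
      refine ⟨TT, fun h => (if h ∈ T0 then cv h else 0)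
        + cv χ * (if h ∈ Tu' then du h else 0) + cv χ * (if h ∈ Tw' then dw h else 0),
        ?_, ?_⟩
      · intro h hh
        have hh' : h ∈ TT := hh
        rcases Finset.mem_union.mp hh' with hh1 | hh2
        · rcases Finset.mem_union.mp hh1 with h0 | h1
          · exact ⟨hTH (Finset.mem_coe.mpr (Finset.mem_of_mem_erase h0)),
              by simp [Finset.ne_of_mem_erase h0]⟩
          · exact hTu'H h1
        · exact hTw'H hh2
      · have hstep1 : ∑ h ∈ TT, (((if h ∈ T0 then cv h else 0)
            + cv χ * (if h ∈ Tu' then du h else 0)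
            + cv χ * (if h ∈ Tw' then dw h else 0) : ℕ) : ℝ) • h
            = (∑ h ∈ TT, ((if h ∈ T0 then cv h else 0 : ℕ) : ℝ) • h)
            + (∑ h ∈ TT, ((cv χ * (if h ∈ Tu' then du h else 0) : ℕ) : ℝ) • h)
            + (∑ h ∈ TT, ((cv χ * (if h ∈ Tw' then dw h else 0) : ℕ) : ℝ) • h) := by
          rw [← Finset.sum_add_distrib, ← Finset.sum_add_distrib]
          exact Finset.sum_congr rfl fun h _ => by
            rw [Nat.cast_add, Nat.cast_add, add_smul, add_smul]
        have hstep2 : ∑ h ∈ TT, ((cv χ * (if h ∈ Tu' then du h else 0) : ℕ) : ℝ) • h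
            = (cv χ : ℝ) • u := by
          have : ∀ h, ((cv χ * (if h ∈ Tu' then du h else 0) : ℕ) : ℝ) • h
              = (cv χ : ℝ) • (((if h ∈ Tu' then du h else 0 : ℕ) : ℝ) • h) := fun h => by
            rw [Nat.cast_mul, mul_smul]
          rw [Finset.sum_congr rfl fun h _ => this h, ← Finset.smul_sum,
            hsplit Tu' du hTuTT, ← hu']
        have hstep3 : ∑ h ∈ TT, ((cv χ * (if h ∈ Tw' then dw h else 0) : ℕ) : ℝ) • h
            = (cv χ : ℝ) • w := by
          have : ∀ h, ((cv χ * (if h ∈ Tw' then dw h else 0) : ℕ) : ℝ) • h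
              = (cv χ : ℝ) • (((if h ∈ Tw' then dw h else 0 : ℕ) : ℝ) • h) := fun h => by
            rw [Nat.cast_mul, mul_smul]
          rw [Finset.sum_congr rfl fun h _ => this h, ← Finset.smul_sum,
            hsplit Tw' dw hTwTT, ← hw']
        rw [hstep1, hstep2, hstep3, hsplit T0 cv hT0TT]
        have hvv : v = (∑ h ∈ T0, (cv h : ℝ) • h) + (cv χ : ℝ) • χ := by
          rw [hvsum, hT0]
          exact (Finset.sum_erase_add T _ hχT).symm
        rw [hvv, hchi, smul_add]
        ring
    · refine ⟨T, cv, ?_, hvsum⟩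
      intro h hh
      have hh' : h ∈ T := hh
      refine ⟨hTH hh, ?_⟩
      simp only [Set.mem_singleton_iff]
      rintro rfl
      exact hχT hh'
  have heq := hmin (H \ {χ}) Set.diff_subset hHB
  have : χ ∈ H \ {χ} := by rw [heq]; exact hχH
  exact this.2 rfl

end Aux

/-- For any induced cycle of length `k ≥ 4` in the Hilbert extender graph, any gap
coloring uses exactly two colors, and consequently `k = 4`; in particular the Hilbert
extender graph contains no hole of length at least 5. -/
theorem stmt_16 {α : Type*} [Fintype α] [PartialOrder α] (m : ℕ) (lc rc : α → ℕ)
    (hclr : ∀ x, lc x ≤ rc x) (hcrep : ∀ x y : α, x < y ↔ rc x + 1 ≤ lc y)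
    (hcm : ∀ x, rc x < m) (hcan : ∀ i < m, (∃ x, lc x = i) ∧ (∃ x, rc x = i))
    (k : ℕ) (hk : 4 ≤ k)
    (f : ZMod k → Set α) (hHS : ∀ v, HilbertSet m lc rc (f v))
    (hinj : Function.Injective f)
    (hcyc : ∀ i j : ZMod k, i ≠ j →
      ((f i ∩ f j).Nonempty ↔ (j = i + 1 ∨ i = j + 1)))
    (c : ZMod k → ℕ) (Z : ZMod k → Set α)
    (hcol : ∀ v, c v ≤ m ∧
      (Z v ⊆ leftBorder rc (c v) ∨ Z v ⊆ rightBorder lc (c v)) ∧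
      f v = gapSet lc rc (c v) ∪ Z v) :
    (Set.range c).ncard = 2 ∧ k = 4 := by
  haveI : NeZero k := ⟨by omega⟩
  haveI : Nonempty (ZMod k) := ⟨0⟩
  -- small nonvanishing facts in `ZMod k`
  have hnz : ∀ n : ℕ, 0 < n → n < k → ((n : ℕ) : ZMod k) ≠ 0 := by
    intro n hn hnk h
    have hd := (ZMod.natCast_eq_zero_iff n k).mp h
    have := Nat.le_of_dvd hn hd
    omega
  have h1 : (1 : ZMod k) ≠ 0 := by
    have := hnz 1 (by norm_num) (by omega); exact_mod_cast this
  have h2 : (2 : ZMod k) ≠ 0 := by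
    have := hnz 2 (by norm_num) (by omega); exact_mod_cast this
  have h3 : (3 : ZMod k) ≠ 0 := by
    have := hnz 3 (by norm_num) (by omega); exact_mod_cast this
  -- consecutive vertices are adjacent
  have hedge : ∀ t : ZMod k, ∃ x, x ∈ f t ∧ x ∈ f (t + 1) := by
    intro t
    have hne : t ≠ t + 1 := fun h => h1 (by linear_combination -h)
    obtain ⟨x, hx⟩ := (hcyc t (t + 1) hne).mpr (Or.inl rfl)
    exact ⟨x, hx.1, hx.2⟩
  -- common elements of an edge are in no other vertex
  have hwit : ∀ t s : ZMod k, s ≠ t → s ≠ t + 1 → ∀ x, x ∈ f t → x ∈ f (t + 1) →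
      x ∉ f s := by
    intro t s hst hst1 x hxt hxt1 hxs
    rcases (hcyc s t hst).mp ⟨x, hxs, hxt⟩ with hA | hA
    · rcases (hcyc s (t + 1) hst1).mp ⟨x, hxs, hxt1⟩ with hB | hB
      · exact hst (add_right_cancel hB).symm
      · exact h3 (by linear_combination -hA - hB)
    · exact hst1 hA
  -- structure facts from the coloring
  have hGsub : ∀ v, gapSet lc rc (c v) ⊆ f v := fun v => by
    rw [(hcol v).2.2]; exact Set.subset_union_left
  have hmemb : ∀ (v : ZMod k) x, x ∈ f v → lc x ≤ c v ∧ c v ≤ rc x + 1 := by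
    intro v x hx
    obtain ⟨-, hside, hfv⟩ := hcol v
    rw [hfv] at hx
    rcases hx with hx | hx
    · obtain ⟨hg1, hg2⟩ := mem_gapSet'.mp hx
      omega
    · rcases hside with hL | hR
      · have := mem_leftBorder'.mp (hL hx)
        have := hclr x
        omega
      · have := mem_rightBorder'.mp (hR hx)
        have := hclr x
        omega
  have hnotmem : ∀ (v : ZMod k) x, x ∉ f v → c v ≤ lc x ∨ rc x < c v := by
    intro v x hx
    by_contra h
    push_neg at h
    exact hx (hGsub v (mem_gapSet'.mpr ⟨by omega, h.2⟩))
  -- every gap set used by the coloring is nonempty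
  have hGne : ∀ t : ZMod k, (gapSet lc rc (c t)).Nonempty := by
    intro t
    by_contra hem
    rw [Set.not_nonempty_iff_eq_empty] at hem
    -- two distinct elements of f t
    obtain ⟨x, hxa, hxb'⟩ := hedge (t - 1)
    have hxb : x ∈ f t := by rwa [show t - 1 + 1 = t by ring] at hxb'
    obtain ⟨y, hya, hyb⟩ := hedge t
    have hxy : x ≠ y := by
      rintro rfl
      have hne : (t - 1) ≠ (t + 1) := fun h => h2 (by linear_combination -h)
      rcases (hcyc (t - 1) (t + 1) hne).mp ⟨x, hxa, hyb⟩ with hA | hA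
      · exact h1 (by linear_combination hA)
      · exact h3 (by linear_combination -hA)
    have hft : f t = Z t := by
      rw [(hcol t).2.2, hem, Set.empty_union]
    have hxZ : x ∈ Z t := by rwa [hft] at hxb
    refine not_hilbertSet_of_decomp hclr hcrep hcm hcan
      (S := f t) (A := {x}) (B := f t \ {x}) ?_ ?_ ?_ ?_ ?_ ?_ (hHS t)
    · exact (Set.union_diff_cancel (Set.singleton_subset_iff.mpr hxb)).symm
    · exact Set.disjoint_singleton_left.mpr (fun h => h.2 rfl)
    · exact ⟨x, rfl⟩
    · exact ⟨y, hya, fun h => hxy (Set.mem_singleton_iff.mp h).symm⟩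
    · rcases (hcol t).2.1 with hL | hR
      · have he : ({x} : Set α) = gapSet lc rc (c t) ∪ {x} := by rw [hem]; simp
        rw [he]
        exact chi_mem_L hclr hcrep (Set.singleton_subset_iff.mpr (hL hxZ))
      · have he : ({x} : Set α) = gapSet lc rc (c t) ∪ {x} := by rw [hem]; simp
        rw [he]
        exact chi_mem_R hclr hcrep (Set.singleton_subset_iff.mpr (hR hxZ))
    · rcases (hcol t).2.1 with hL | hR
      · have he : f t \ {x} = gapSet lc rc (c t) ∪ (f t \ {x}) := by rw [hem]; simp
        rw [he]
        exact chi_mem_L hclr hcrep (fun a ha => hL (by rw [← hft]; exact ha.1))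
      · have he : f t \ {x} = gapSet lc rc (c t) ∪ (f t \ {x}) := by rw [hem]; simp
        rw [he]
        exact chi_mem_R hclr hcrep (fun a ha => hR (by rw [← hft]; exact ha.1))
  -- two vertices with the same color are adjacent
  have hsame : ∀ s t : ZMod k, s ≠ t → c s = c t → (t = s + 1 ∨ s = t + 1) := by
    intro s t hst hcc
    refine (hcyc s t hst).mp ?_
    obtain ⟨g, hg⟩ := hGne t
    have hg' : g ∈ gapSet lc rc (c s) := by rw [hcc]; exact hg
    exact ⟨g, hGsub s hg', hGsub t hg⟩
  -- a maximal-color vertex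
  obtain ⟨t₀, -, hmax0⟩ := Finset.exists_max_image (Finset.univ : Finset (ZMod k)) c
    ⟨0, Finset.mem_univ 0⟩
  have hmax' : ∀ s, c s ≤ c t₀ := fun s => hmax0 s (Finset.mem_univ s)
  -- there is an adjacent pair both of maximal color
  have hmaxpair : ∃ t : ZMod k, c t = c t₀ ∧ c (t + 1) = c t₀ ∧ ∀ s, c s ≤ c t := by
    by_cases hca : c (t₀ + 1) = c t₀
    · exact ⟨t₀, rfl, hca, hmax'⟩
    · by_cases hcb : c (t₀ - 1) = c t₀
      · refine ⟨t₀ - 1, hcb, ?_, fun s => le_of_le_of_eq (hmax' s) hcb.symm⟩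
        rw [show t₀ - 1 + 1 = t₀ by ring]
      · exfalso
        have hpq : c (t₀ - 1) ≠ c (t₀ + 1) := by
          intro h
          have hne12 : (t₀ - 1) ≠ (t₀ + 1) := fun hh => h2 (by linear_combination -hh)
          rcases hsame (t₀ - 1) (t₀ + 1) hne12 h with hA | hA
          · exact h1 (by linear_combination hA)
          · exact h3 (by linear_combination -hA)
        have hlt1 : c (t₀ - 1) < c t₀ := lt_of_le_of_ne (hmax' _) hcb
        have hlt2 : c (t₀ + 1) < c t₀ := lt_of_le_of_ne (hmax' _) hca
        rcases lt_or_gt_of_ne hpq with hlt | hlt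
        · obtain ⟨x, hxa, hxb'⟩ := hedge (t₀ - 1)
          have hxb : x ∈ f t₀ := by rwa [show t₀ - 1 + 1 = t₀ by ring] at hxb'
          have hxn : x ∉ f (t₀ + 1) := by
            refine hwit (t₀ - 1) (t₀ + 1) (fun h => h2 (by linear_combination h))
              (fun h => h1 (by linear_combination h)) x hxa ?_
            rwa [show t₀ - 1 + 1 = t₀ by ring]
          obtain ⟨hb1a, hb1b⟩ := hmemb (t₀ - 1) x hxa
          obtain ⟨hb2a, hb2b⟩ := hmemb t₀ x hxb
          rcases hnotmem (t₀ + 1) x hxn with hcc | hcc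
          · omega
          · omega
        · obtain ⟨y, hya, hyb⟩ := hedge t₀
          have hyn : y ∉ f (t₀ - 1) :=
            hwit t₀ (t₀ - 1) (fun h => h1 (by linear_combination -h))
              (fun h => h2 (by linear_combination -h)) y hya hyb
          obtain ⟨hb1a, hb1b⟩ := hmemb t₀ y hya
          obtain ⟨hb2a, hb2b⟩ := hmemb (t₀ + 1) y hyb
          rcases hnotmem (t₀ - 1) y hyn with hcc | hcc
          · omega
          · omega
  obtain ⟨t, hct, hct1, hmaxt⟩ := hmaxpair
  have hMM : c (t + 1) = c t := hct1.trans hct.symm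
  -- the colors of the two outer neighbors are strictly smaller
  have hq : c (t + 2) < c t := by
    refine lt_of_le_of_ne (hmaxt _) ?_
    intro h
    have hne : (t + 2) ≠ t := fun hh => h2 (by linear_combination hh)
    rcases hsame (t + 2) t hne h with hA | hA
    · exact h3 (by linear_combination -hA)
    · exact h1 (by linear_combination hA)
  have hp : c (t - 1) < c t := by
    refine lt_of_le_of_ne (hmaxt _) ?_
    intro h
    have h' : c (t - 1) = c (t + 1) := h.trans hMM.symm
    have hne : (t - 1) ≠ (t + 1) := fun hh => h2 (by linear_combination -hh)
    rcases hsame (t - 1) (t + 1) hne h' with hA | hA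
    · exact h1 (by linear_combination hA)
    · exact h3 (by linear_combination -hA)
  -- witness of the edge (t+1, t+2), not in f (t-1)
  obtain ⟨y, hya, hyb'⟩ := hedge (t + 1)
  have hyb : y ∈ f (t + 2) := by rwa [show t + 1 + 1 = t + 2 by ring] at hyb'
  have hyn : y ∉ f (t - 1) := by
    refine hwit (t + 1) (t - 1) (fun h => h2 (by linear_combination -h))
      (fun h => h3 (by linear_combination -h)) y hya ?_
    rwa [show t + 1 + 1 = t + 2 by ring]
  obtain ⟨hby1a, hby1b⟩ := hmemb (t + 1) y hya
  obtain ⟨hby2a, hby2b⟩ := hmemb (t + 2) y hyb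
  have hys : c (t - 1) ≤ c (t + 2) := by
    rcases hnotmem (t - 1) y hyn with hcc | hcc
    · omega
    · omega
  -- witness of the edge (t-1, t), not in f (t+2)
  obtain ⟨x, hxa, hxb'⟩ := hedge (t - 1)
  have hxb : x ∈ f t := by rwa [show t - 1 + 1 = t by ring] at hxb'
  have hxn : x ∉ f (t + 2) := by
    refine hwit (t - 1) (t + 2) (fun h => h3 (by linear_combination h))
      (fun h => h2 (by linear_combination h)) x hxa ?_
    rwa [show t - 1 + 1 = t by ring]
  obtain ⟨hbx1a, hbx1b⟩ := hmemb (t - 1) x hxa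
  obtain ⟨hbx2a, hbx2b⟩ := hmemb t x hxb
  have hxs : c (t + 2) ≤ c (t - 1) := by
    rcases hnotmem (t + 2) x hxn with hcc | hcc
    · omega
    · omega
  have hpq' : c (t - 1) = c (t + 2) := le_antisymm hys hxs
  -- the two outer neighbors have the same color, hence are adjacent: k = 4
  have hne : (t - 1) ≠ (t + 2) := fun h => h3 (by linear_combination -h)
  have hk4 : k = 4 := by
    rcases hsame (t - 1) (t + 2) hne hpq' with hA | hA
    · exact absurd (show (2 : ZMod k) = 0 by linear_combination hA) h2
    · have h4 : ((4 : ℕ) : ZMod k) = 0 := by push_cast; linear_combination -hA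
      exact le_antisymm
        (Nat.le_of_dvd (by norm_num) ((ZMod.natCast_eq_zero_iff 4 k).mp h4)) hk
  subst hk4
  refine ⟨?_, rfl⟩
  have hall : ∀ t s : ZMod 4, s = t ∨ s = t + 1 ∨ s = t + 2 ∨ s = t - 1 := by decide
  have hrange : Set.range c = {c (t + 2), c t} := by
    apply Set.Subset.antisymm
    · rintro v ⟨s, rfl⟩
      simp only [Set.mem_insert_iff, Set.mem_singleton_iff]
      rcases hall t s with h | h | h | h
      · right; rw [h]
      · right; rw [h]; exact hMM
      · left; rw [h]
      · left; rw [h]; exact hpq'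
    · intro v hv
      simp only [Set.mem_insert_iff, Set.mem_singleton_iff] at hv
      rcases hv with h | h
      · exact ⟨t + 2, h.symm⟩
      · exact ⟨t, h.symm⟩
  rw [hrange]
  exact Set.ncard_pair (ne_of_lt hq)
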